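/- Let G=(V,E) be a finite connected simple graph. The minimum length k of a sequence of vertices x₁, …, x_k such that, setting G₀ = G and G_{i+1} = G_i / x_{i+1} (where x_{i+1} is required to be a vertex of G_i), the final graph G_k has exactly one vertex, is exactly R(G), the radius of G. Equivalently, the minimum number of flooding moves needed to flood an entire 2-colored connected graph in 2-FREE-FLOOD-IT equals the radius of its reduced graph. -/

import Mathlib

open SimpleGraph

noncomputable def eccentr {V : Type} (G : SimpleGraph V) (x : V) : ℕ :=
  sSup (Set.range (G.dist x))

noncomputable def grRadius {V : Type} (G : SimpleGraph V) : ℕ :=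
  sInf (Set.range (eccentr G))

def ncontract {V : Type} (G : SimpleGraph V) (x : V) :
    SimpleGraph {v : V // ¬ G.Adj x v} where
  Adj a b := G.Adj a.1 b.1 ∨
    (a.1 = x ∧ b.1 ≠ x ∧ ∃ y, G.Adj x y ∧ G.Adj y b.1) ∨
    (b.1 = x ∧ a.1 ≠ x ∧ ∃ y, G.Adj x y ∧ G.Adj y a.1)
  symm := ⟨fun a b h => by
    rcases h with h | h | h
    · exact Or.inl h.symm
    · exact Or.inr (Or.inr h)
    · exact Or.inr (Or.inl h)⟩
  loopless := ⟨fun a h => by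
    rcases h with h | ⟨h1, h2, -⟩ | ⟨h1, h2, -⟩
    · exact G.loopless.irrefl _ h
    · exact h2 h1
    · exact h2 h1⟩

/-- `Reduces k W H` holds iff there is a sequence of `k` neighborhood contractions
`G₀ = H`, `Gᵢ₊₁ = Gᵢ / xᵢ₊₁` (each `xᵢ₊₁` a vertex of `Gᵢ`) such that the final
graph `Gₖ` has exactly one vertex.  This models a sequence of `k` flooding moves in
2-FREE-FLOOD-IT played on the reduced graph `H`, flooding the whole graph. -/
def Reduces : (k : ℕ) → (W : Type) → SimpleGraph W → Prop
  | 0, W, _ => Nat.card W = 1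
  | k + 1, W, H => ∃ x : W, Reduces k _ (ncontract H x)

/-! Contracting at `x` merges `x` with its neighbourhood, so it lowers the eccentricity of `x`
by one: `k + 1` contractions at a centre suffice. Conversely, a walk of `G / x` lifts to `G`
with the same length if it avoids `x`, and otherwise costs one extra edge, spent on leaving `x`
into its neighbourhood. Hence if `c` has eccentricity `k` in `G / x`, then the neighbour `u` of
`c` on a shortest path to `x` has eccentricity at most `k + 1` in `G`. By induction, `G`
reduces to one vertex in `k` moves iff some vertex has eccentricity at most `k`. -/

namespace SimpleGraph

section Walks

variable {V : Type*} {G : SimpleGraph V}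

lemma edist_add_edist_le_length {u v w : V} (p : G.Walk u v) (hw : w ∈ p.support) :
    G.edist u w + G.edist w v ≤ p.length := by
  classical
  rw [← p.take_spec hw, Walk.length_append, Nat.cast_add]
  exact add_le_add (edist_le _) (edist_le _)

lemma exists_edist_le_one_edist_le {a b : V} {m : ℕ∞} (h : G.edist a b ≤ m + 1) :
    ∃ u, G.edist a u ≤ 1 ∧ G.edist u b ≤ m := by
  rcases eq_or_ne m ⊤ with rfl | hm
  · exact ⟨a, by simp, le_top⟩
  lift m to ℕ using hm
  obtain ⟨p, hp⟩ := exists_walk_of_edist_ne_top (h.trans_lt (by simp)).ne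
  cases p with
  | nil => exact ⟨a, by simp, by simp⟩
  | @cons _ u _ hau p =>
    refine ⟨u, (edist_eq_one_iff_adj.2 hau).le, (edist_le p).trans ?_⟩
    rw [← hp, Walk.length_cons] at h
    exact_mod_cast Nat.le_of_add_le_add_right (by exact_mod_cast h)

end Walks

section Contraction

variable {V : Type} {H : SimpleGraph V} {x : V}

def contractedVertex (H : SimpleGraph V) (x : V) : {v : V // ¬ H.Adj x v} := ⟨x, H.irrefl⟩

lemma edist_ncontract_le_length {a y : V} (ha : ¬ H.Adj x a) (hxy : H.Adj x y) (r : H.Walk a y) :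
    (ncontract H x).edist ⟨a, ha⟩ (contractedVertex H x) ≤ r.length := by
  induction r with
  | nil => exact absurd hxy ha
  | @cons a b _ hab r ih =>
    by_cases hax : a = x
    · subst hax; simp [contractedVertex]
    have hone : (1 : ℕ∞) ≤ (r.cons hab).length := by simp
    by_cases hxb : H.Adj x b
    · have hadj : (ncontract H x).Adj ⟨a, ha⟩ (contractedVertex H x) :=
        Or.inr (Or.inr ⟨rfl, hax, b, hxb, hab.symm⟩)
      exact (edist_eq_one_iff_adj.2 hadj).le.trans hone
    · have hadj : (ncontract H x).Adj ⟨a, ha⟩ ⟨b, hxb⟩ := Or.inl hab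
      calc _ ≤ 1 + (ncontract H x).edist ⟨b, hxb⟩ (contractedVertex H x) :=
            SimpleGraph.edist_triangle.trans (by gcongr; exact (edist_eq_one_iff_adj.2 hadj).le)
        _ ≤ 1 + r.length := by gcongr; exact ih hxb hxy
        _ = (r.cons hab).length := by rw [Walk.length_cons, add_comm]; norm_cast

lemma edist_ncontract_add_one_le {v : {v : V // ¬ H.Adj x v}} (hv : v.1 ≠ x) :
    (ncontract H x).edist (contractedVertex H x) v + 1 ≤ H.edist x v := by
  obtain ⟨v, hxv⟩ := v
  rcases eq_or_ne (H.edist x v) ⊤ with h | h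
  · exact h ▸ le_top
  obtain ⟨p, hp⟩ := exists_walk_of_edist_ne_top h
  rw [← hp]
  cases p with
  | nil => exact absurd rfl hv
  | cons hxy p =>
    rw [edist_comm, Walk.length_cons, Nat.cast_add, Nat.cast_one, ← p.length_reverse]
    gcongr
    exact edist_ncontract_le_length hxv hxy p.reverse

lemma edist_le_length_of_contractedVertex_notMem_support {a b : {v : V // ¬ H.Adj x v}}
    (q : (ncontract H x).Walk a b) (hq : contractedVertex H x ∉ q.support) :
    H.edist a b ≤ q.length := by
  induction q with
  | nil => simp
  | @cons a c b hac q ih =>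
    rw [Walk.support_cons, List.mem_cons, not_or] at hq
    have hc : c.1 ≠ x := fun hc =>
      hq.2 ((Subtype.ext hc : c = contractedVertex H x) ▸ q.start_mem_support)
    have hac : H.Adj a c := by
      rcases hac with hac | ⟨ha, -⟩ | ⟨hc', -⟩
      · exact hac
      · exact absurd (Subtype.ext ha).symm hq.1
      · exact absurd hc' hc
    calc H.edist a b ≤ 1 + H.edist c b :=
          SimpleGraph.edist_triangle.trans (by gcongr; exact (edist_eq_one_iff_adj.2 hac).le)
      _ ≤ 1 + q.length := by gcongr; exact ih hq.2
      _ = (q.cons _).length := by rw [Walk.length_cons, add_comm]; norm_cast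

lemma edist_le_edist_ncontract_add_one (v : {v : V // ¬ H.Adj x v}) :
    H.edist x v ≤ (ncontract H x).edist (contractedVertex H x) v + 1 := by
  classical
  rcases eq_or_ne ((ncontract H x).edist (contractedVertex H x) v) ⊤ with h | h
  · simp [h]
  obtain ⟨q, hq⟩ := exists_walk_of_edist_ne_top h
  rw [← hq]
  refine le_trans ?_ (add_le_add_left (Nat.cast_le.2 q.length_bypass_le_length) 1)
  have hpath := q.bypass_isPath
  generalize q.bypass = p at hpath
  cases p with
  | nil => simp [contractedVertex]
  | @cons _ b _ hadj p =>
    have hxb : H.edist x b ≤ 2 := by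
      rcases hadj with hxb | ⟨-, -, y, hxy, hyb⟩ | ⟨-, hne, -⟩
      · exact (edist_eq_one_iff_adj.2 hxb).le.trans (by norm_num)
      · exact_mod_cast edist_le (.cons hxy (.cons hyb .nil))
      · exact absurd rfl hne
    have hp : contractedVertex H x ∉ p.support := (Walk.cons_isPath_iff _ _ |>.1 hpath).2
    calc H.edist x v ≤ 2 + p.length := SimpleGraph.edist_triangle.trans <|
          add_le_add hxb (edist_le_length_of_contractedVertex_notMem_support p hp)
      _ = (p.cons _).length + 1 := by rw [Walk.length_cons]; push_cast; ring

lemma eccent_ncontract_le_of_eccent_le {k : ℕ} (h : H.eccent x ≤ k + 1) :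
    (ncontract H x).eccent (contractedVertex H x) ≤ k := by
  refine (eccent_le_iff _ _).2 fun v => ?_
  by_cases hv : v.1 = x
  · simp [(Subtype.ext hv : v = contractedVertex H x)]
  · rw [← ENat.add_le_add_iff_right ENat.one_ne_top]
    exact (edist_ncontract_add_one_le hv).trans (edist_le_eccent.trans h)

lemma exists_eccent_le_of_eccent_ncontract_le {k : ℕ} {c : {v : V // ¬ H.Adj x v}}
    (hc : (ncontract H x).eccent c ≤ k) : ∃ u, H.eccent u ≤ k + 1 := by
  classical
  set m := (ncontract H x).edist c (contractedVertex H x)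
  have hmk : m ≤ k := edist_le_eccent.trans hc
  obtain ⟨u, hcu, hux⟩ : ∃ u, H.edist c u ≤ 1 ∧ H.edist u x ≤ m :=
    exists_edist_le_one_edist_le <| by
      rw [edist_comm]; exact (edist_le_edist_ncontract_add_one c).trans_eq (by rw [edist_comm])
  refine ⟨u, (eccent_le_iff _ _).2 fun v => ?_⟩
  by_cases hxv : H.Adj x v
  · calc H.edist u v ≤ m + 1 :=
          SimpleGraph.edist_triangle.trans (add_le_add hux (edist_eq_one_iff_adj.2 hxv).le)
      _ ≤ k + 1 := by gcongr
  have hcv : (ncontract H x).edist c ⟨v, hxv⟩ ≤ k := edist_le_eccent.trans hc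
  obtain ⟨q, hq⟩ := exists_walk_of_edist_ne_top (hcv.trans_lt (ENat.natCast_lt_top k)).ne
  have hqk : (q.length : ℕ∞) ≤ k := hq ▸ hcv
  by_cases hxq : contractedVertex H x ∈ q.support
  · calc H.edist u v ≤ m + ((ncontract H x).edist (contractedVertex H x) ⟨v, hxv⟩ + 1) :=
          SimpleGraph.edist_triangle.trans (add_le_add hux (edist_le_edist_ncontract_add_one _))
      _ ≤ q.length + 1 := by rw [← add_assoc]; gcongr; exact edist_add_edist_le_length q hxq
      _ ≤ k + 1 := by gcongr
  · have hcv' := edist_le_length_of_contractedVertex_notMem_support q hxq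
    calc H.edist u v ≤ 1 + q.length :=
          SimpleGraph.edist_triangle.trans (add_le_add (edist_comm ▸ hcu) hcv')
      _ ≤ k + 1 := by rw [add_comm]; gcongr

end Contraction

theorem reduces_iff_exists_eccent_le {k : ℕ} {W : Type} {H : SimpleGraph W} :
    Reduces k W H ↔ ∃ u, H.eccent u ≤ k := by
  induction k generalizing W with
  | zero =>
    simp only [Reduces, Nat.card_eq_one_iff_unique, CharP.cast_eq_zero, nonpos_iff_eq_zero,
      eccent_eq_zero_iff]
    exact ⟨fun ⟨hW, ⟨u⟩⟩ => ⟨u, hW⟩, fun ⟨u, hW⟩ => ⟨hW, ⟨u⟩⟩⟩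
  | succ k ih =>
    simp only [Reduces, ih, Nat.cast_add, Nat.cast_one]
    exact ⟨fun ⟨_, _, hc⟩ => exists_eccent_le_of_eccent_ncontract_le hc,
      fun ⟨x, hx⟩ => ⟨x, contractedVertex H x, eccent_ncontract_le_of_eccent_le hx⟩⟩

lemma eccentr_le_iff {V : Type} [Finite V] {G : SimpleGraph V} (hG : G.Connected) (u : V)
    (k : ℕ) :
    eccentr G u ≤ k ↔ G.eccent u ≤ k := by
  rw [eccentr, ← iSup, ciSup_le_iff' (Set.finite_range _).bddAbove, eccent_le_iff]
  simp only [← (hG u _).coe_dist_eq_edist, Nat.cast_le]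

end SimpleGraph

theorem stmt_13 {V : Type} [Fintype V] (G : SimpleGraph V) (hconn : G.Connected) :
    IsLeast {k : ℕ | Reduces k V G} (grRadius G) := by
  have hred (k : ℕ) : Reduces k V G ↔ ∃ u, eccentr G u ≤ k := by
    simp only [reduces_iff_exists_eccent_le, eccentr_le_iff hconn]
  have : Nonempty V := hconn.nonempty
  obtain ⟨c, hc⟩ : grRadius G ∈ Set.range (eccentr G) := Nat.sInf_mem (Set.range_nonempty _)
  refine ⟨(hred _).2 ⟨c, hc.le⟩, fun k hk => ?_⟩
  obtain ⟨u, hu⟩ := (hred k).1 hk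
  exact (Nat.sInf_le (Set.mem_range_self u)).trans hu
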